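/- Grouped parallel solution of one configuration pattern: for every n ≥ 2, every function d : Bool × Bool → Bool, all sets X, Y ⊆ {1, …, ⌊n/2⌋−1} with |X| = ℓ, and every g ∈ G(n), there exist k ≤ 6(ℓ·2^ℓ + |Y|) and moves m₁, …, m_k ∈ S(n) such that the product h = m_k ⋯ m₁ fixes every position of P(n) not lying in some Cl(x, y) with (x, y) ∈ X × Y whose configuration under c₀ ∘ g⁻¹ equals d, and for every (x, y) ∈ X × Y whose configuration under c₀ ∘ g⁻¹ equals d, the coloring c₀ ∘ (h g)⁻¹ agrees with c₀ on Cl(x, y). -/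

import Mathlib

/-- Sticker positions of the `n × n × 1` Rubik's Cube. -/
abbrev RPos (n : ℕ) := Fin n × Fin n × Bool

/-- Underlying function of the row move `ρ i`. -/
def rowMoveFun (n : ℕ) (i : Fin n) : RPos n → RPos n :=
  fun p => if p.2.1 = i then (p.1.rev, p.2.1, !p.2.2) else p

theorem rowMoveFun_involutive (n : ℕ) (i : Fin n) :
    Function.Involutive (rowMoveFun n i) := by
  rintro ⟨x, y, b⟩
  by_cases h : y = i <;> simp [rowMoveFun, h]

/-- The row move `ρ i`. -/
def rowMove (n : ℕ) (i : Fin n) : Equiv.Perm (RPos n) :=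
  (rowMoveFun_involutive n i).toPerm _

/-- Underlying function of the column move `σ j`. -/
def colMoveFun (n : ℕ) (j : Fin n) : RPos n → RPos n :=
  fun p => if p.1 = j then (p.1, p.2.1.rev, !p.2.2) else p

theorem colMoveFun_involutive (n : ℕ) (j : Fin n) :
    Function.Involutive (colMoveFun n j) := by
  rintro ⟨x, y, b⟩
  by_cases h : x = j <;> simp [colMoveFun, h]

/-- The column move `σ j`. -/
def colMove (n : ℕ) (j : Fin n) : Equiv.Perm (RPos n) :=
  (colMoveFun_involutive n j).toPerm _

/-- The set `S(n)` of the `2n` legal moves. -/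
def RMoves (n : ℕ) : Set (Equiv.Perm (RPos n)) :=
  Set.range (rowMove n) ∪ Set.range (colMove n)

/-- The group `G(n)` generated by the legal moves. -/
def RGroup (n : ℕ) : Subgroup (Equiv.Perm (RPos n)) :=
  Subgroup.closure (RMoves n)

/-- The solved coloring `c₀`. -/
def solvedColoring (n : ℕ) : RPos n → Bool := fun p => p.2.2

/-- The cluster `Cl(x, y)`. -/
def cluster (n : ℕ) (x y : Fin n) : Set (RPos n) :=
  {p | (p.1 = x ∨ p.1 = x.rev) ∧ (p.2.1 = y ∨ p.2.1 = y.rev)}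

/-- The configuration of cluster `(x, y)` under a coloring `c`. -/
def clusterConfig (n : ℕ) (c : RPos n → Bool) (x y : Fin n) :
    Bool × Bool → Bool :=
  fun q => c (if q.1 then x.rev else x, if q.2 then y.rev else y, true)

/-- An interior index pair: `1 ≤ x ≤ ⌊n/2⌋ − 1` and `1 ≤ y ≤ ⌊n/2⌋ − 1`. -/
def Interior (n : ℕ) (x y : Fin n) : Prop :=
  1 ≤ (x : ℕ) ∧ (x : ℕ) ≤ n / 2 - 1 ∧ 1 ≤ (y : ℕ) ∧ (y : ℕ) ≤ n / 2 - 1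

/-- The six standard patterns: functions `Bool × Bool → Bool` whose value is
independent of the second argument or independent of the first argument. -/
def StandardPattern (f : Bool × Bool → Bool) : Prop :=
  (∀ ε δ δ', f (ε, δ) = f (ε, δ')) ∨ (∀ ε ε' δ, f (ε, δ) = f (ε', δ))

/-!
Every colouring `c₀ ∘ g⁻¹` with `g ∈ G(n)` gives opposite colours to the two faces of a
position, and in every cluster its configuration is constant along rows or along columns
(`StandardPattern`): a move reverses and turns over one row or column of a cluster, which
preserves both properties. Hence `d` may be assumed standard, as otherwise no cluster has configuration `d`.

For a single cluster `(x, y)`, the commutator of `σ_x` and `ρ_y` cycles three of its cubies and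
turns over the two in row `y`; its transpose turns over column `x`; centring the commutator at
`x.rev` or `y.rev` turns over the other column or row, and two commutators turn over all four.
Performed simultaneously on a column set `S` and a row set `T`, such a block acts in this way on
every cluster of `S × T` and fixes every other position. Grouping the rows `y ∈ Y` by the set
`S(y)` of those `x ∈ X` for which cluster `(x, y)` has configuration `d` gives at most `2^ℓ`
groups, the group of `S` being solved by one block of at most `4(|S| + |T|)` moves.
-/

open Equiv

section

variable {n : ℕ}

lemma length_flatMap_powerset_le {ι α : Type*} [DecidableEq ι] {X Y : Finset ι}
    {f : Finset ι → Finset ι → List α} (hf : ∀ S T, (f S T).length ≤ 4 * S.card + 4 * T.card)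
    {sel : ι → Finset ι} (hsel : ∀ y, sel y ⊆ X) :
    (X.powerset.toList.flatMap fun S => f S (Y.filter (sel · = S))).length ≤
      4 * (X.card * 2 ^ X.card) + 4 * Y.card := by
  rw [List.length_flatMap]
  calc (X.powerset.toList.map fun S => (f S (Y.filter (sel · = S))).length).sum
      ≤ (X.powerset.toList.map fun S => 4 * X.card + 4 * (Y.filter (sel · = S)).card).sum := by
        refine List.sum_le_sum fun S hS => (hf _ _).trans ?_
        have := Finset.card_le_card (Finset.mem_powerset.mp (Finset.mem_toList.mp hS))
        omega
    _ = ∑ S ∈ X.powerset, (4 * X.card + 4 * (Y.filter (sel · = S)).card) :=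
        Finset.sum_map_toList _ _
    _ = 4 * (X.card * 2 ^ X.card) + 4 * Y.card := by
        rw [Finset.sum_add_distrib, Finset.sum_const, ← Finset.mul_sum,
          ← Finset.card_eq_sum_card_fiberwise fun y _ => Finset.mem_powerset.mpr (hsel y),
          Finset.card_powerset, smul_eq_mul]
        ring

lemma List.prod_flatMap_apply_eq_self {ι α : Type*} {l : List ι} {f : ι → List (Equiv.Perm α)}
    {q : α} (h : ∀ b ∈ l, (f b).prod q = q) : (l.flatMap f).prod q = q := by
  induction l with
  | nil => rfl
  | cons b l ih =>
    rw [List.flatMap_cons, List.prod_append, Perm.mul_apply,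
      ih fun b' hb' => h b' (List.mem_cons_of_mem _ hb'), h b List.mem_cons_self]

lemma List.prod_flatMap_apply_eq {ι α : Type*} {l : List ι} (hl : l.Nodup) {a : ι} (ha : a ∈ l)
    {f : ι → List (Equiv.Perm α)} {K : Set α} (hK : ∀ q ∈ K, (f a).prod q ∈ K)
    (hfix : ∀ b ∈ l, b ≠ a → ∀ q ∈ K, (f b).prod q = q) {q : α} (hq : q ∈ K) :
    (l.flatMap f).prod q = (f a).prod q := by
  induction l with
  | nil => simp at ha
  | cons b l ih =>
    obtain ⟨hbl, hl⟩ := List.nodup_cons.mp hl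
    rw [List.flatMap_cons, List.prod_append, Perm.mul_apply]
    by_cases hba : b = a
    · subst hba
      rw [List.prod_flatMap_apply_eq_self fun b' hb' =>
        hfix b' (List.mem_cons_of_mem _ hb') (ne_of_mem_of_not_mem hb' hbl) q hq]
    · have hal : a ∈ l := (List.mem_cons.mp ha).resolve_left (Ne.symm hba)
      rw [ih hl hal fun b' hb' => hfix b' (List.mem_cons_of_mem _ hb')]
      exact hfix b List.mem_cons_self hba _ (hK q hq)

@[simp] lemma rowMove_apply (i : Fin n) (p : RPos n) :
    rowMove n i p = if p.2.1 = i then (p.1.rev, p.2.1, !p.2.2) else p := rfl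

@[simp] lemma colMove_apply (j : Fin n) (p : RPos n) :
    colMove n j p = if p.1 = j then (p.1, p.2.1.rev, !p.2.2) else p := rfl

lemma inv_eq_self_of_mem_RMoves {m : Perm (RPos n)} (hm : m ∈ RMoves n) : m⁻¹ = m := by
  rcases hm with ⟨i, rfl⟩ | ⟨j, rfl⟩ <;> rfl

lemma list_prod_mem_RGroup {L : List (Perm (RPos n))} (hL : ∀ m ∈ L, m ∈ RMoves n) :
    L.prod ∈ RGroup n :=
  (RGroup n).list_prod_mem fun m hm => Subgroup.subset_closure (hL m hm)

def otherFace (p : RPos n) : RPos n := (p.1, p.2.1, !p.2.2)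

lemma apply_otherFace_of_mem_RGroup {g : Perm (RPos n)} (hg : g ∈ RGroup n) (p : RPos n) :
    g (otherFace p) = otherFace (g p) := by
  induction hg using Subgroup.closure_induction generalizing p with
  | mem m hm =>
    obtain ⟨u, v, b⟩ := p
    rcases hm with ⟨i, rfl⟩ | ⟨j, rfl⟩ <;> simp only [rowMove_apply, colMove_apply, otherFace] <;>
      split_ifs <;> rfl
  | one => rfl
  | mul a b _ _ iha ihb => simp only [Perm.mul_apply, ihb, iha]
  | inv a _ ih => rw [Perm.inv_eq_iff_eq, ih]; simp

lemma solvedColoring_comp_inv_otherFace {g : Perm (RPos n)} (hg : g ∈ RGroup n) (p : RPos n) :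
    (solvedColoring n ∘ ⇑g⁻¹) (otherFace p) = !(solvedColoring n ∘ ⇑g⁻¹) p := by
  simp only [Function.comp_apply, apply_otherFace_of_mem_RGroup (inv_mem hg)]
  rfl

-- `revIf x ε` is the paper's `x_ε`.
def revIf (z : Fin n) (ε : Bool) : Fin n := if ε then z.rev else z

lemma revIf_rev (z : Fin n) (ε : Bool) : (revIf z ε).rev = revIf z !ε := by
  cases ε <;> simp [revIf]

lemma mem_cluster_iff_exists {x y : Fin n} {p : RPos n} :
    p ∈ cluster n x y ↔ ∃ ε δ, p.1 = revIf x ε ∧ p.2.1 = revIf y δ := by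
  simp only [cluster, Set.mem_ofPred_eq, revIf, Bool.exists_bool, Bool.false_eq_true, if_false,
    if_true]
  tauto

lemma cluster_rev_left (x y : Fin n) : cluster n x.rev y = cluster n x y := by
  ext p; simp only [cluster, Set.mem_ofPred_eq, Fin.rev_rev]; tauto

lemma cluster_rev_right (x y : Fin n) : cluster n x y.rev = cluster n x y := by
  ext p; simp only [cluster, Set.mem_ofPred_eq, Fin.rev_rev]; tauto

lemma eq_or_eq_rev_of_mem_cluster {x y a b : Fin n} {p : RPos n} (hxy : p ∈ cluster n x y)
    (hab : p ∈ cluster n a b) : b = y ∨ b = y.rev := by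
  rcases hxy.2 with h | h <;> rcases hab.2 with h' | h' <;> rw [h] at h'
  exacts [.inl h'.symm, .inr (by rw [h', Fin.rev_rev]), .inr h'.symm, .inl (Fin.rev_inj.mp h').symm]

lemma apply_mem_cluster_iff_of_mem_RGroup {g : Perm (RPos n)} (hg : g ∈ RGroup n)
    {x y : Fin n} {p : RPos n} : g p ∈ cluster n x y ↔ p ∈ cluster n x y := by
  induction hg using Subgroup.closure_induction generalizing p with
  | mem m hm =>
    obtain ⟨u, v, b⟩ := p
    rcases hm with ⟨i, rfl⟩ | ⟨j, rfl⟩ <;> simp only [rowMove_apply, colMove_apply] <;>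
      split_ifs <;> simp [cluster, Fin.rev_eq_iff, or_comm]
  | one => rfl
  | mul a b _ _ iha ihb => rw [Perm.mul_apply, iha, ihb]
  | inv a _ ih => rw [← ih]; simp

lemma clusterConfig_comp_colMove {c : RPos n → Bool} (hc : ∀ p, c (otherFace p) = !c p)
    (j x y : Fin n) :
    clusterConfig n (c ∘ colMove n j) x y = fun q =>
      if revIf x q.1 = j then !clusterConfig n c x y (q.1, !q.2) else clusterConfig n c x y q := by
  funext ⟨ε, δ⟩
  change c (colMove n j (revIf x ε, revIf y δ, true)) = _
  rw [colMove_apply]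
  split_ifs
  · rw [revIf_rev]; exact hc (revIf x ε, revIf y !δ, true)
  · rfl

lemma clusterConfig_comp_rowMove {c : RPos n → Bool} (hc : ∀ p, c (otherFace p) = !c p)
    (i x y : Fin n) :
    clusterConfig n (c ∘ rowMove n i) x y = fun q =>
      if revIf y q.2 = i then !clusterConfig n c x y (!q.1, q.2) else clusterConfig n c x y q := by
  funext ⟨ε, δ⟩
  change c (rowMove n i (revIf x ε, revIf y δ, true)) = _
  rw [rowMove_apply]
  split_ifs
  · rw [revIf_rev]; exact hc (revIf x !ε, revIf y δ, true)
  · rfl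

lemma StandardPattern.colFlip {f : Bool × Bool → Bool} (hf : StandardPattern f)
    (P : Bool → Prop) [DecidablePred P] :
    StandardPattern fun q => if P q.1 then !f (q.1, !q.2) else f q := by
  have key : ∀ (a : Bool → Bool) (f : Bool × Bool → Bool), StandardPattern f →
      StandardPattern fun q => if a q.1 then !f (q.1, !q.2) else f q := by
    unfold StandardPattern; decide
  simpa using key (fun ε => decide (P ε)) f hf

lemma StandardPattern.rowFlip {f : Bool × Bool → Bool} (hf : StandardPattern f)
    (P : Bool → Prop) [DecidablePred P] :
    StandardPattern fun q => if P q.2 then !f (!q.1, q.2) else f q := by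
  have key : ∀ (a : Bool → Bool) (f : Bool × Bool → Bool), StandardPattern f →
      StandardPattern fun q => if a q.2 then !f (!q.1, q.2) else f q := by
    unfold StandardPattern; decide
  simpa using key (fun δ => decide (P δ)) f hf

lemma standardPattern_clusterConfig_comp {c : RPos n → Bool} (hc : ∀ p, c (otherFace p) = !c p)
    (hstd : ∀ x y, StandardPattern (clusterConfig n c x y)) {m : Perm (RPos n)}
    (hm : m ∈ RMoves n) (x y : Fin n) : StandardPattern (clusterConfig n (c ∘ m) x y) := by
  rcases hm with ⟨i, rfl⟩ | ⟨j, rfl⟩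
  · rw [clusterConfig_comp_rowMove hc]; exact (hstd x y).rowFlip (revIf y · = i)
  · rw [clusterConfig_comp_colMove hc]; exact (hstd x y).colFlip (revIf x · = j)

theorem standardPattern_clusterConfig_of_mem_RGroup {g : Perm (RPos n)} (hg : g ∈ RGroup n)
    (x y : Fin n) : StandardPattern (clusterConfig n (solvedColoring n ∘ ⇑g⁻¹) x y) := by
  induction hg using Subgroup.closure_induction_left generalizing x y with
  | one => exact Or.inl fun _ _ _ => rfl
  | mul_left m hm g hg ih =>
    rw [mul_inv_rev, inv_eq_self_of_mem_RMoves hm]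
    exact standardPattern_clusterConfig_comp (solvedColoring_comp_inv_otherFace hg) ih hm x y
  | inv_mul_cancel m hm g hg ih =>
    rw [mul_inv_rev, inv_inv]
    exact standardPattern_clusterConfig_comp (solvedColoring_comp_inv_otherFace hg) ih hm x y

lemma prod_map_colMove_apply {l : List (Fin n)} (hl : l.Nodup) (p : RPos n) :
    (l.map (colMove n)).prod p = if p.1 ∈ l then (p.1, p.2.1.rev, !p.2.2) else p := by
  induction l with
  | nil => simp
  | cons a l ih =>
    obtain ⟨ha, hl⟩ := List.nodup_cons.mp hl
    obtain ⟨u, v, b⟩ := p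
    simp only [List.map_cons, List.prod_cons, Perm.mul_apply, ih hl, List.mem_cons]
    by_cases hu : u ∈ l
    · simp [hu, show u ≠ a from fun h => ha (h ▸ hu)]
    · by_cases h : u = a <;> simp [hu, h, ha]

lemma prod_map_rowMove_apply {l : List (Fin n)} (hl : l.Nodup) (p : RPos n) :
    (l.map (rowMove n)).prod p = if p.2.1 ∈ l then (p.1.rev, p.2.1, !p.2.2) else p := by
  induction l with
  | nil => simp
  | cons a l ih =>
    obtain ⟨ha, hl⟩ := List.nodup_cons.mp hl
    obtain ⟨u, v, b⟩ := p
    simp only [List.map_cons, List.prod_cons, Perm.mul_apply, ih hl, List.mem_cons]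
    by_cases hv : v ∈ l
    · simp [hv, show v ≠ a from fun h => ha (h ▸ hv)]
    · by_cases h : v = a <;> simp [hv, h, ha]

noncomputable def colFlips (U : Finset (Fin n)) : List (Perm (RPos n)) := U.toList.map (colMove n)

noncomputable def rowFlips (V : Finset (Fin n)) : List (Perm (RPos n)) := V.toList.map (rowMove n)

@[simp] lemma prod_colFlips_apply (U : Finset (Fin n)) (p : RPos n) :
    (colFlips U).prod p = if p.1 ∈ U then (p.1, p.2.1.rev, !p.2.2) else p := by
  simp [colFlips, prod_map_colMove_apply U.nodup_toList]

@[simp] lemma prod_rowFlips_apply (V : Finset (Fin n)) (p : RPos n) :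
    (rowFlips V).prod p = if p.2.1 ∈ V then (p.1.rev, p.2.1, !p.2.2) else p := by
  simp [rowFlips, prod_map_rowMove_apply V.nodup_toList]

noncomputable def colRowCommutator (U V : Finset (Fin n)) : List (Perm (RPos n)) :=
  colFlips U ++ rowFlips V ++ colFlips U ++ rowFlips V

noncomputable def rowColCommutator (U V : Finset (Fin n)) : List (Perm (RPos n)) :=
  rowFlips V ++ colFlips U ++ rowFlips V ++ colFlips U

@[simp] lemma length_colRowCommutator (U V : Finset (Fin n)) :
    (colRowCommutator U V).length = 2 * U.card + 2 * V.card := by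
  simp [colRowCommutator, colFlips, rowFlips]; ring

@[simp] lemma length_rowColCommutator (U V : Finset (Fin n)) :
    (rowColCommutator U V).length = 2 * U.card + 2 * V.card := by
  simp [rowColCommutator, colFlips, rowFlips]; ring

lemma mem_RMoves_of_mem_colFlips {U : Finset (Fin n)} {m : Perm (RPos n)}
    (hm : m ∈ colFlips U) : m ∈ RMoves n := by
  obtain ⟨j, -, rfl⟩ := List.mem_map.mp hm
  exact Or.inr ⟨j, rfl⟩

lemma mem_RMoves_of_mem_rowFlips {V : Finset (Fin n)} {m : Perm (RPos n)}
    (hm : m ∈ rowFlips V) : m ∈ RMoves n := by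
  obtain ⟨i, -, rfl⟩ := List.mem_map.mp hm
  exact Or.inl ⟨i, rfl⟩

lemma mem_RMoves_of_mem_colRowCommutator {U V : Finset (Fin n)} {m : Perm (RPos n)}
    (hm : m ∈ colRowCommutator U V) : m ∈ RMoves n := by
  simp only [colRowCommutator, List.mem_append] at hm
  rcases hm with ((h | h) | h) | h
  all_goals first | exact mem_RMoves_of_mem_colFlips h | exact mem_RMoves_of_mem_rowFlips h

lemma mem_RMoves_of_mem_rowColCommutator {U V : Finset (Fin n)} {m : Perm (RPos n)}
    (hm : m ∈ rowColCommutator U V) : m ∈ RMoves n := by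
  simp only [rowColCommutator, List.mem_append] at hm
  rcases hm with ((h | h) | h) | h
  all_goals first | exact mem_RMoves_of_mem_colFlips h | exact mem_RMoves_of_mem_rowFlips h

lemma notMem_or_of_forall_notMem_cluster {U V : Finset (Fin n)} {p : RPos n}
    (hp : ∀ x ∈ U, ∀ y ∈ V, p ∉ cluster n x y) :
    (p.1 ∉ U ∧ p.1.rev ∉ U) ∨ (p.2.1 ∉ V ∧ p.2.1.rev ∉ V) := by
  by_contra! h
  obtain ⟨x, hx, hpx⟩ : ∃ x ∈ U, p.1 = x ∨ p.1 = x.rev := by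
    by_cases h1 : p.1 ∈ U
    · exact ⟨_, h1, Or.inl rfl⟩
    · exact ⟨_, (h.1 h1), Or.inr (Fin.rev_rev _).symm⟩
  obtain ⟨y, hy, hpy⟩ : ∃ y ∈ V, p.2.1 = y ∨ p.2.1 = y.rev := by
    by_cases h2 : p.2.1 ∈ V
    · exact ⟨_, h2, Or.inl rfl⟩
    · exact ⟨_, (h.2 h2), Or.inr (Fin.rev_rev _).symm⟩
  exact hp x hx y hy ⟨hpx, hpy⟩

lemma prod_colRowCommutator_apply_eq_self {U V : Finset (Fin n)} {p : RPos n}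
    (hp : ∀ x ∈ U, ∀ y ∈ V, p ∉ cluster n x y) : (colRowCommutator U V).prod p = p := by
  obtain ⟨u, v, b⟩ := p
  rcases notMem_or_of_forall_notMem_cluster hp with ⟨h1, h2⟩ | ⟨h1, h2⟩
  · by_cases hv : v ∈ V <;> simp_all [colRowCommutator]
  · by_cases hu : u ∈ U <;> simp_all [colRowCommutator]

lemma prod_rowColCommutator_apply_eq_self {U V : Finset (Fin n)} {p : RPos n}
    (hp : ∀ x ∈ U, ∀ y ∈ V, p ∉ cluster n x y) : (rowColCommutator U V).prod p = p := by
  obtain ⟨u, v, b⟩ := p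
  rcases notMem_or_of_forall_notMem_cluster hp with ⟨h1, h2⟩ | ⟨h1, h2⟩
  · by_cases hv : v ∈ V <;> simp_all [rowColCommutator]
  · by_cases hu : u ∈ U <;> simp_all [rowColCommutator]

def RevFree (S : Finset (Fin n)) : Prop := ∀ x ∈ S, x.rev ∉ S

lemma revFree_of_forall_lt_rev {S : Finset (Fin n)} (hS : ∀ x ∈ S, x < x.rev) : RevFree S :=
  fun x hx hrx => (hS x hx).not_gt (by simpa using hS x.rev hrx)

lemma RevFree.mono {S T : Finset (Fin n)} (hT : RevFree T) (hST : S ⊆ T) : RevFree S :=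
  fun x hx hrx => hT x (hST hx) (hST hrx)

lemma forall_notMem_cluster_map_rev_left {U V : Finset (Fin n)} {p : RPos n}
    (hp : ∀ x ∈ U, ∀ y ∈ V, p ∉ cluster n x y) :
    ∀ x ∈ U.map Fin.revPerm.toEmbedding, ∀ y ∈ V, p ∉ cluster n x y := by
  intro x hx y hy
  rw [← cluster_rev_left]
  exact hp x.rev (by simpa using hx) y hy

lemma forall_notMem_cluster_map_rev_right {U V : Finset (Fin n)} {p : RPos n}
    (hp : ∀ x ∈ U, ∀ y ∈ V, p ∉ cluster n x y) :
    ∀ x ∈ U, ∀ y ∈ V.map Fin.revPerm.toEmbedding, p ∉ cluster n x y := by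
  intro x hx y hy
  rw [← cluster_rev_right]
  exact hp x hx y.rev (by simpa using hy)

/-- A recipe that, for rev-free column and row sets `S` and `T`, solves every cluster of `S × T`
having configuration `d` at once, and moves no position outside the clusters of `S × T`. -/
structure PatternBlock (n : ℕ) (d : Bool × Bool → Bool) where
  moves : Finset (Fin n) → Finset (Fin n) → List (Perm (RPos n))
  length_moves_le : ∀ S T, (moves S T).length ≤ 4 * S.card + 4 * T.card
  mem_RMoves : ∀ S T, ∀ m ∈ moves S T, m ∈ RMoves n
  prod_apply_eq_self : ∀ S T p, (∀ x ∈ S, ∀ y ∈ T, p ∉ cluster n x y) → (moves S T).prod p = p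
  solvedColoring_prod_apply : ∀ S T, RevFree S → RevFree T → ∀ x ∈ S, ∀ y ∈ T, ∀ ε δ,
    solvedColoring n ((moves S T).prod (revIf x ε, revIf y δ, true)) = d (ε, δ)

namespace PatternBlock

def constTrue : PatternBlock n fun _ => true where
  moves _ _ := []
  length_moves_le _ _ := by simp
  mem_RMoves _ _ := by simp
  prod_apply_eq_self _ _ _ _ := rfl
  solvedColoring_prod_apply _ _ _ _ _ _ _ _ _ _ := rfl

noncomputable def snd : PatternBlock n fun q => q.2 where
  moves S T := colRowCommutator S T
  length_moves_le S T := by simp; omega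
  mem_RMoves _ _ _ := mem_RMoves_of_mem_colRowCommutator
  prod_apply_eq_self _ _ _ := prod_colRowCommutator_apply_eq_self
  solvedColoring_prod_apply S T hS hT x hx y hy ε δ := by
    cases ε <;> cases δ <;> simp [colRowCommutator, revIf, solvedColoring, hx, hy, hS x hx, hT y hy]

noncomputable def notSnd : PatternBlock n fun q => !q.2 where
  moves S T := colRowCommutator S (T.map Fin.revPerm.toEmbedding)
  length_moves_le S T := by simp; omega
  mem_RMoves _ _ _ := mem_RMoves_of_mem_colRowCommutator
  prod_apply_eq_self _ _ _ hp :=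
    prod_colRowCommutator_apply_eq_self (forall_notMem_cluster_map_rev_right hp)
  solvedColoring_prod_apply S T hS hT x hx y hy ε δ := by
    cases ε <;> cases δ <;> simp [colRowCommutator, revIf, solvedColoring, hx, hy, hS x hx, hT y hy]

noncomputable def fst : PatternBlock n fun q => q.1 where
  moves S T := rowColCommutator S T
  length_moves_le S T := by simp; omega
  mem_RMoves _ _ _ := mem_RMoves_of_mem_rowColCommutator
  prod_apply_eq_self _ _ _ := prod_rowColCommutator_apply_eq_self
  solvedColoring_prod_apply S T hS hT x hx y hy ε δ := by
    cases ε <;> cases δ <;> simp [rowColCommutator, revIf, solvedColoring, hx, hy, hS x hx, hT y hy]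

noncomputable def notFst : PatternBlock n fun q => !q.1 where
  moves S T := rowColCommutator (S.map Fin.revPerm.toEmbedding) T
  length_moves_le S T := by simp; omega
  mem_RMoves _ _ _ := mem_RMoves_of_mem_rowColCommutator
  prod_apply_eq_self _ _ _ hp :=
    prod_rowColCommutator_apply_eq_self (forall_notMem_cluster_map_rev_left hp)
  solvedColoring_prod_apply S T hS hT x hx y hy ε δ := by
    cases ε <;> cases δ <;> simp [rowColCommutator, revIf, solvedColoring, hx, hy, hS x hx, hT y hy]

noncomputable def constFalse : PatternBlock n fun _ => false where
  moves S T := rowColCommutator (S.map Fin.revPerm.toEmbedding) T ++ colRowCommutator S T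
  length_moves_le S T := by simp; omega
  mem_RMoves _ _ _ hm := (List.mem_append.mp hm).elim mem_RMoves_of_mem_rowColCommutator
    mem_RMoves_of_mem_colRowCommutator
  prod_apply_eq_self _ _ _ hp := by
    rw [List.prod_append, Perm.mul_apply, prod_colRowCommutator_apply_eq_self hp,
      prod_rowColCommutator_apply_eq_self (forall_notMem_cluster_map_rev_left hp)]
  solvedColoring_prod_apply S T hS hT x hx y hy ε δ := by
    cases ε <;> cases δ <;>
      simp [rowColCommutator, colRowCommutator, revIf, solvedColoring, hx, hy, hS x hx, hT y hy]

end PatternBlock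

lemma StandardPattern.eq_or {d : Bool × Bool → Bool} (hd : StandardPattern d) :
    d = (fun _ => true) ∨ d = (fun q => q.2) ∨ d = (fun q => !q.2) ∨ d = (fun q => q.1) ∨
      d = (fun q => !q.1) ∨ d = (fun _ => false) := by
  revert d; unfold StandardPattern; decide

lemma StandardPattern.nonempty_patternBlock {d : Bool × Bool → Bool} (hd : StandardPattern d) :
    Nonempty (PatternBlock n d) := by
  rcases hd.eq_or with rfl | rfl | rfl | rfl | rfl | rfl
  exacts [⟨.constTrue⟩, ⟨.snd⟩, ⟨.notSnd⟩, ⟨.fst⟩, ⟨.notFst⟩, ⟨.constFalse⟩]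

theorem PatternBlock.exists_grouped {d : Bool × Bool → Bool} (B : PatternBlock n d)
    {X Y : Finset (Fin n)} (hX : RevFree X) (hY : RevFree Y) (A : Fin n → Fin n → Prop) :
    ∃ L : List (Perm (RPos n)), L.length ≤ 4 * (X.card * 2 ^ X.card) + 4 * Y.card ∧
      (∀ m ∈ L, m ∈ RMoves n) ∧
      (∀ p, (∀ x ∈ X, ∀ y ∈ Y, A x y → p ∉ cluster n x y) → L.prod p = p) ∧
      ∀ x ∈ X, ∀ y ∈ Y, A x y → ∀ ε δ,
        solvedColoring n (L.prod (revIf x ε, revIf y δ, true)) = d (ε, δ) := by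
  classical
  set sel : Fin n → Finset (Fin n) := fun y => X.filter (A · y)
  set fiber : Finset (Fin n) → Finset (Fin n) := fun S => Y.filter (sel · = S)
  have mem_fiber {S y} : y ∈ fiber S ↔ y ∈ Y ∧ sel y = S := Finset.mem_filter
  refine ⟨X.powerset.toList.flatMap fun S => B.moves S (fiber S), ?_, ?_, ?_, ?_⟩
  · exact length_flatMap_powerset_le B.length_moves_le fun y => Finset.filter_subset ..
  · simp only [List.mem_flatMap]
    rintro m ⟨S, -, hm⟩
    exact B.mem_RMoves _ _ m hm
  · intro p hp
    refine List.prod_flatMap_apply_eq_self fun S _ => B.prod_apply_eq_self _ _ _ ?_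
    intro x hx y hy
    obtain ⟨hyY, rfl⟩ := mem_fiber.mp hy
    obtain ⟨hxX, hA⟩ := Finset.mem_filter.mp hx
    exact hp x hxX y hyY hA
  · intro x hx y hy hA ε δ
    have hsel : sel y ⊆ X := Finset.filter_subset ..
    rw [List.prod_flatMap_apply_eq (Finset.nodup_toList _)
      (Finset.mem_toList.mpr (Finset.mem_powerset.mpr hsel))
      (K := cluster n x y) ?_ ?_ (mem_cluster_iff_exists.mpr ⟨ε, δ, rfl, rfl⟩)]
    · exact B.solvedColoring_prod_apply _ _ (hX.mono hsel)
        (hY.mono (Finset.filter_subset ..)) x (Finset.mem_filter.mpr ⟨hx, hA⟩) y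
        (mem_fiber.mpr ⟨hy, rfl⟩) ε δ
    · intro q hq
      exact (apply_mem_cluster_iff_of_mem_RGroup (list_prod_mem_RGroup (B.mem_RMoves _ _))).mpr hq
    · intro S _ hS q hq
      refine B.prod_apply_eq_self _ _ _ fun a _ b hb hqab => ?_
      rcases eq_or_eq_rev_of_mem_cluster hq hqab with rfl | rfl
      · exact hS (mem_fiber.mp hb).2.symm
      · exact hY y hy (mem_fiber.mp hb).1

lemma comp_inv_apply_eq_solvedColoring {c : RPos n → Bool} (hc : ∀ p, c (otherFace p) = !c p)
    {h : Perm (RPos n)} (hh : h ∈ RGroup n) {x y : Fin n}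
    (hxy : ∀ ε δ, solvedColoring n (h (revIf x ε, revIf y δ, true)) = clusterConfig n c x y (ε, δ))
    {p : RPos n} (hp : p ∈ cluster n x y) : c (h⁻¹ p) = solvedColoring n p := by
  obtain ⟨⟨u, v, b⟩, rfl⟩ : ∃ q, h q = p := ⟨h⁻¹ p, by simp⟩
  rw [Perm.coe_inv, Equiv.symm_apply_apply]
  obtain ⟨ε, δ, rfl, rfl⟩ :=
    mem_cluster_iff_exists.mp ((apply_mem_cluster_iff_of_mem_RGroup hh).mp hp)
  cases b
  · change c (otherFace (revIf x ε, revIf y δ, true)) =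
      solvedColoring n (h (otherFace (revIf x ε, revIf y δ, true)))
    rw [hc, apply_otherFace_of_mem_RGroup hh]
    exact congrArg (!·) (hxy ε δ).symm
  · exact (hxy ε δ).symm

end

theorem nxnx1_grouped_cluster_solution_general (n : ℕ)
    (d : Bool × Bool → Bool) (X Y : Finset (Fin n))
    (hX : ∀ x ∈ X, 1 ≤ (x : ℕ) ∧ (x : ℕ) ≤ n / 2 - 1)
    (hY : ∀ y ∈ Y, 1 ≤ (y : ℕ) ∧ (y : ℕ) ≤ n / 2 - 1)
    (g : Equiv.Perm (RPos n)) (hg : g ∈ RGroup n) :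
    ∃ L : List (Equiv.Perm (RPos n)),
      L.length ≤ 6 * (X.card * 2 ^ X.card + Y.card) ∧
      (∀ m ∈ L, m ∈ RMoves n) ∧
      (∀ p : RPos n,
        (∀ x ∈ X, ∀ y ∈ Y,
          clusterConfig n (solvedColoring n ∘ ⇑g⁻¹) x y = d → p ∉ cluster n x y) →
        L.prod p = p) ∧
      (∀ x ∈ X, ∀ y ∈ Y,
        clusterConfig n (solvedColoring n ∘ ⇑g⁻¹) x y = d →
        ∀ p ∈ cluster n x y,
          (solvedColoring n ∘ ⇑(L.prod * g)⁻¹) p = solvedColoring n p) := by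
  set c := solvedColoring n ∘ ⇑g⁻¹
  by_cases hd : StandardPattern d
  swap
  · exact ⟨[], by simp, by simp, fun _ _ => rfl, fun x _ y _ hxy =>
      absurd (hxy ▸ standardPattern_clusterConfig_of_mem_RGroup hg x y) hd⟩
  have revFree_of_interior {Z : Finset (Fin n)}
      (hZ : ∀ z ∈ Z, 1 ≤ (z : ℕ) ∧ (z : ℕ) ≤ n / 2 - 1) : RevFree Z :=
    revFree_of_forall_lt_rev fun z hz => by
      have := hZ z hz
      rw [Fin.lt_def, Fin.val_rev]
      omega
  obtain ⟨B⟩ := hd.nonempty_patternBlock (n := n)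
  obtain ⟨L, hlen, hmoves, hfix, hsolved⟩ := B.exists_grouped (revFree_of_interior hX)
    (revFree_of_interior hY) fun x y => clusterConfig n c x y = d
  refine ⟨L, by omega, hmoves, hfix, fun x hx y hy hxy p hp => ?_⟩
  rw [mul_inv_rev]
  exact comp_inv_apply_eq_solvedColoring (solvedColoring_comp_inv_otherFace hg)
    (list_prod_mem_RGroup hmoves) (fun ε δ => by rw [hsolved x hx y hy hxy, hxy]) hp

/-- **Grouped parallel solution of one configuration pattern.**
Given a pattern `d` and sets `X, Y` of interior indices with `|X| = ℓ`, at
most `6(ℓ·2^ℓ + |Y|)` legal moves suffice to solve all clusters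
`(x, y) ∈ X × Y` whose configuration under `c₀ ∘ g⁻¹` equals `d`, without
affecting any position outside those clusters. -/
theorem nxnx1_grouped_cluster_solution (n : ℕ) (hn : 2 ≤ n)
    (d : Bool × Bool → Bool) (X Y : Finset (Fin n))
    (hX : ∀ x ∈ X, 1 ≤ (x : ℕ) ∧ (x : ℕ) ≤ n / 2 - 1)
    (hY : ∀ y ∈ Y, 1 ≤ (y : ℕ) ∧ (y : ℕ) ≤ n / 2 - 1)
    (g : Equiv.Perm (RPos n)) (hg : g ∈ RGroup n) :
    ∃ L : List (Equiv.Perm (RPos n)),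
      L.length ≤ 6 * (X.card * 2 ^ X.card + Y.card) ∧
      (∀ m ∈ L, m ∈ RMoves n) ∧
      (∀ p : RPos n,
        (∀ x ∈ X, ∀ y ∈ Y,
          clusterConfig n (solvedColoring n ∘ ⇑g⁻¹) x y = d → p ∉ cluster n x y) →
        L.prod p = p) ∧
      (∀ x ∈ X, ∀ y ∈ Y,
        clusterConfig n (solvedColoring n ∘ ⇑g⁻¹) x y = d →
        ∀ p ∈ cluster n x y,
          (solvedColoring n ∘ ⇑(L.prod * g)⁻¹) p = solvedColoring n p) :=
  nxnx1_grouped_cluster_solution_general n d X Y hX hY g hg
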